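/- For every permutation π of {1,…,n} and every integer m ≥ 2, a_m(π) equals the number of diagram cells of π whose rank is at least m−2. -/
import Mathlib


/-- `amCount n m π` is the number of A_m-pairs of `π`: pairs `(i,j)` with `i < j`,
`π j < π i`, and at least `m - 2` indices `k < i` with `π k < π j`. -/
noncomputable def amCount (n m : ℕ) (π : Equiv.Perm (Fin n)) : ℕ :=
  Nat.card {p : Fin n × Fin n // p.1 < p.2 ∧ π p.2 < π p.1 ∧
    m - 2 ≤ Nat.card {k : Fin n // k < p.1 ∧ π k < π p.2}}

/-- The rank of a cell `(i,j)`: the number of indices `k < i` with `π k < j`. -/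
noncomputable def diagRank (n : ℕ) (π : Equiv.Perm (Fin n)) (i j : Fin n) : ℕ :=
  Nat.card {k : Fin n // k < i ∧ π k < j}

theorem amCount_eq_card_high_rank_diagram_cells (n m : ℕ) (π : Equiv.Perm (Fin n))
    (hm : 2 ≤ m) :
    amCount n m π =
      Nat.card {p : Fin n × Fin n //
        p.2 < π p.1 ∧ p.1 < π.symm p.2 ∧ m - 2 ≤ diagRank n π p.1 p.2} := by
  unfold amCount diagRank
  apply Nat.card_congr
  refine ⟨fun x => ⟨(x.1.1, π x.1.2), ?_, ?_, ?_⟩,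
    fun y => ⟨(y.1.1, π.symm y.1.2), ?_, ?_, ?_⟩, ?_, ?_⟩
  · exact x.2.2.1
  · simpa using x.2.1
  · exact x.2.2.2
  · exact y.2.2.1
  · simpa using y.2.1
  · simpa using y.2.2.2
  · intro x; ext <;> simp
  · intro y; ext <;> simp
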